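/- arXiv:2505.08018 — 9 statements merged into one kernel-verified Lean document; each statement's English description precedes it below -/
import Mathlib

section
/- Let M₁ = (L(E),ρ₁) and M₂ = (L(E),ρ₂) be q-matroids without loops and 0 < λ < 1, with ρ = λρ₁ + (1−λ)ρ₂. A subspace X is a cyclic space of (L(E),ρ) if and only if there is no hyperplane H of X such that simultaneously ρ₁(H) < ρ₁(X) and ρ₂(H) < ρ₂(X). -/
variable {F E : Type*} [Field F] [AddCommGroup E] [Module F E]

/-- A q-rank function: bounded by dimension, monotone and submodular. -/
def IsQRankFn (ρ : Submodule F E → ℝ) : Prop :=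
  (∀ A : Submodule F E, 0 ≤ ρ A ∧ ρ A ≤ (Module.finrank F A : ℝ)) ∧
  (∀ A B : Submodule F E, A ≤ B → ρ A ≤ ρ B) ∧
  (∀ A B : Submodule F E, ρ (A ⊓ B) + ρ (A ⊔ B) ≤ ρ A + ρ B)

/-- X is a cyclic space of (L(E),ρ). -/
def IsCyclicSpace (ρ : Submodule F E → ℝ) (X : Submodule F E) : Prop :=
  ∀ H : Submodule F E, H ≤ X → Module.finrank F H + 1 = Module.finrank F X →
    ρ X = ρ H ∨
    (0 < ρ X - ρ H ∧ ∃ a : Submodule F E, Module.finrank F a = 1 ∧ a ≤ X ∧ ¬ a ≤ H ∧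
      ρ X - ρ H < ρ a)

lemma exists_one_dim_aux [FiniteDimensional F E] (X H : Submodule F E)
    (hle : H ≤ X) (hdim : Module.finrank F H + 1 = Module.finrank F X) :
    ∃ a : Submodule F E, Module.finrank F a = 1 ∧ a ≤ X ∧ ¬ a ≤ H := by
  have hne : H ≠ X := by intro h; rw [h] at hdim; omega
  obtain ⟨x, hxX, hxH⟩ := SetLike.exists_of_lt (lt_of_le_of_ne hle hne)
  have hx0 : x ≠ 0 := fun h => hxH (h ▸ H.zero_mem)
  exact ⟨Submodule.span F {x}, finrank_span_singleton hx0,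
    (Submodule.span_singleton_le_iff_mem x X).2 hxX,
    fun h => hxH (h (Submodule.mem_span_singleton_self x))⟩

lemma unit_drop_aux [FiniteDimensional F E] (ρ : Submodule F E → ℝ) (h : IsQRankFn ρ)
    (X H : Submodule F E) (hle : H ≤ X)
    (hdim : Module.finrank F H + 1 = Module.finrank F X) :
    ρ X ≤ ρ H + 1 := by
  obtain ⟨a, ha1, haX, haH⟩ := exists_one_dim_aux X H hle hdim
  have hsup : H ⊔ a = X := by
    have h1 : H ⊔ a ≤ X := sup_le hle haX
    have h2 : H < H ⊔ a := lt_of_le_of_ne le_sup_left (fun h => haH (h ▸ le_sup_right))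
    have h3 : Module.finrank F H < Module.finrank F (H ⊔ a : Submodule F E) :=
      Submodule.finrank_lt_finrank_of_lt h2
    have h4 : Module.finrank F X ≤ Module.finrank F (H ⊔ a : Submodule F E) := by
      have := Submodule.finrank_mono h1; omega
    exact (Submodule.eq_of_le_of_finrank_le h1 h4).symm ▸ rfl
  have hsm := h.2.2 H a
  rw [hsup] at hsm
  have h0 : (0:ℝ) ≤ ρ (H ⊓ a) := (h.1 _).1
  have hup : ρ a ≤ 1 := by
    have := (h.1 a).2; rw [ha1] at this; exact_mod_cast this
  linarith only [hsm, h0, hup]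

lemma drop01_aux [FiniteDimensional F E] (ρr : Submodule F E → ℝ) (h : IsQRankFn ρr)
    (hint : ∀ X : Submodule F E, ∃ m : ℤ, ρr X = m)
    (X H : Submodule F E) (hle : H ≤ X)
    (hdim : Module.finrank F H + 1 = Module.finrank F X) :
    ρr X = ρr H ∨ ρr X = ρr H + 1 := by
  obtain ⟨m, hm⟩ := hint X
  obtain ⟨n, hn⟩ := hint H
  have h1 : ρr H ≤ ρr X := h.2.1 H X hle
  have h2 : ρr X ≤ ρr H + 1 := unit_drop_aux ρr h X H hle hdim
  rw [hm, hn] at *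
  have hnm : n ≤ m := by exact_mod_cast h1
  have hmn : m ≤ n + 1 := by exact_mod_cast h2
  have : m = n ∨ m = n + 1 := by omega
  rcases this with h | h <;> subst h
  · left; rfl
  · right; push_cast; ring

/-- For loopless q-matroids, X is cyclic in a convex combination iff no hyperplane of X
drops rank in both q-matroids simultaneously. -/
theorem stmt5 [Fintype F] [FiniteDimensional F E]
    (ρ₁ ρ₂ : Submodule F E → ℝ) (h₁ : IsQRankFn ρ₁) (h₂ : IsQRankFn ρ₂)
    (hint₁ : ∀ X : Submodule F E, ∃ m : ℤ, ρ₁ X = m)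
    (hint₂ : ∀ X : Submodule F E, ∃ m : ℤ, ρ₂ X = m)
    (hnl₁ : ∀ x : Submodule F E, Module.finrank F x = 1 → ρ₁ x = 1)
    (hnl₂ : ∀ x : Submodule F E, Module.finrank F x = 1 → ρ₂ x = 1)
    (l : ℝ) (hl0 : 0 < l) (hl1 : l < 1)
    (ρ : Submodule F E → ℝ) (hρ : ∀ X, ρ X = l * ρ₁ X + (1 - l) * ρ₂ X)
    (X : Submodule F E) :
    IsCyclicSpace ρ X ↔
      ¬ ∃ H : Submodule F E, H ≤ X ∧ Module.finrank F H + 1 = Module.finrank F X ∧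
        ρ₁ H < ρ₁ X ∧ ρ₂ H < ρ₂ X := by
  constructor
  · intro hcyc
    rintro ⟨H, hle, hdim, h1lt, h2lt⟩
    have d1 : ρ₁ X = ρ₁ H + 1 :=
      (drop01_aux ρ₁ h₁ hint₁ X H hle hdim).resolve_left (by intro h; rw [h] at h1lt; linarith)
    have d2 : ρ₂ X = ρ₂ H + 1 :=
      (drop01_aux ρ₂ h₂ hint₂ X H hle hdim).resolve_left (by intro h; rw [h] at h2lt; linarith)
    have hdiff : ρ X - ρ H = 1 := by rw [hρ X, hρ H, d1, d2]; ring
    rcases hcyc H hle hdim with heq | ⟨_, a, ha1, _, _, halt⟩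
    · rw [heq] at hdiff; linarith only [hdiff]
    · have : ρ a = 1 := by rw [hρ a, hnl₁ a ha1, hnl₂ a ha1]; ring
      rw [hdiff, this] at halt; linarith only [halt]
  · intro hno H hle hdim
    have hnot : ¬ (ρ₁ H < ρ₁ X ∧ ρ₂ H < ρ₂ X) := fun h => hno ⟨H, hle, hdim, h.1, h.2⟩
    rcases drop01_aux ρ₁ h₁ hint₁ X H hle hdim with d1 | d1 <;>
      rcases drop01_aux ρ₂ h₂ hint₂ X H hle hdim with d2 | d2
    · left; rw [hρ X, hρ H, d1, d2]
    · right
      obtain ⟨a, ha1, haX, haH⟩ := exists_one_dim_aux X H hle hdim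
      have hra : ρ a = 1 := by rw [hρ a, hnl₁ a ha1, hnl₂ a ha1]; ring
      have hdiff : ρ X - ρ H = 1 - l := by rw [hρ X, hρ H, d1, d2]; ring
      refine ⟨by rw [hdiff]; linarith only [hl0, hl1], a, ha1, haX, haH, ?_⟩
      rw [hdiff, hra]; linarith only [hl0, hl1]
    · right
      obtain ⟨a, ha1, haX, haH⟩ := exists_one_dim_aux X H hle hdim
      have hra : ρ a = 1 := by rw [hρ a, hnl₁ a ha1, hnl₂ a ha1]; ring
      have hdiff : ρ X - ρ H = l := by rw [hρ X, hρ H, d1, d2]; ring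
      refine ⟨by rw [hdiff]; linarith only [hl0, hl1], a, ha1, haX, haH, ?_⟩
      rw [hdiff, hra]; linarith only [hl0, hl1]
    · exact absurd ⟨by linarith, by linarith⟩ hnot
end

section
/- Let M₁ and M₂ be q-matroids without loops, with rank functions ρ₁, ρ₂, and let ρ = λρ₁ + (1−λ)ρ₂ for some 0 < λ < 1. Then every cyclic space of M₁ and every cyclic space of M₂ is a cyclic space of (L(E), ρ). -/
variable {F E : Type*} [Field F] [AddCommGroup E] [Module F E]

lemma aux_cyclic [FiniteDimensional F E]
    (ρ₁ ρ₂ : Submodule F E → ℝ) (h₂ : IsQRankFn ρ₂)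
    (hint₁ : ∀ X : Submodule F E, ∃ m : ℤ, ρ₁ X = m)
    (hnl₁ : ∀ x : Submodule F E, Module.finrank F x = 1 → ρ₁ x = 1)
    (hnl₂ : ∀ x : Submodule F E, Module.finrank F x = 1 → ρ₂ x = 1)
    (l : ℝ) (hl0 : 0 < l) (hl1 : l < 1)
    (ρ : Submodule F E → ℝ) (hρ : ∀ X, ρ X = l * ρ₁ X + (1 - l) * ρ₂ X)
    (X : Submodule F E) (hX : IsCyclicSpace ρ₁ X) :
    IsCyclicSpace ρ X := by
  intro H hHX hfin
  -- H is a proper subspace of X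
  have hne : H ≠ X := by
    intro h; rw [h] at hfin; omega
  have hlt : H < X := lt_of_le_of_ne hHX hne
  obtain ⟨x, hxX, hxH⟩ := SetLike.exists_of_lt hlt
  have hx0 : x ≠ 0 := fun h => hxH (h ▸ H.zero_mem)
  set a : Submodule F E := F ∙ x with ha
  have ha1 : Module.finrank F a = 1 := finrank_span_singleton hx0
  have haX : a ≤ X := by rwa [Submodule.span_singleton_le_iff_mem]
  have haH : ¬ a ≤ H := fun h => hxH (h (Submodule.mem_span_singleton_self x))
  -- cyclicity in ρ₁ forces ρ₁ X = ρ₁ H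
  have hd1 : ρ₁ X = ρ₁ H := by
    rcases hX H hHX hfin with h | ⟨hpos, a', ha'1, _, _, hlt'⟩
    · exact h
    · exfalso
      clear haH
      rw [hnl₁ a' ha'1] at hlt'
      obtain ⟨m, hm⟩ := hint₁ X
      obtain ⟨n, hn⟩ := hint₁ H
      rw [hm, hn] at hpos hlt'
      have h1 : (0 : ℝ) < ((m - n : ℤ) : ℝ) := by push_cast; linarith only [hpos]
      have h2 : ((m - n : ℤ) : ℝ) < 1 := by push_cast; linarith only [hlt']
      have h1' : (0 : ℤ) < m - n := by exact_mod_cast h1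
      have h2' : (m - n : ℤ) < 1 := by exact_mod_cast h2
      omega
  -- H ⊔ a = X
  have hsup : H ⊔ a = X := by
    apply Submodule.eq_of_le_of_finrank_eq (sup_le hHX haX)
    have h1 : H < H ⊔ a := lt_of_le_of_ne le_sup_left
      (fun h => haH (h ▸ le_sup_right))
    have h2 := Submodule.finrank_lt_finrank_of_lt h1
    have h3 : Module.finrank F (H ⊔ a : Submodule F E) ≤ Module.finrank F X :=
      Submodule.finrank_mono (sup_le hHX haX)
    omega
  -- bound on ρ₂ X - ρ₂ H
  have hsub := h₂.2.2 H a
  rw [hsup] at hsub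
  have hnn := (h₂.1 (H ⊓ a)).1
  have ha2 : ρ₂ a = 1 := hnl₂ a ha1
  have hd2le : ρ₂ X - ρ₂ H ≤ 1 := by linarith only [hsub, hnn, ha2]
  have hd2nn : ρ₂ H ≤ ρ₂ X := h₂.2.1 H X hHX
  by_cases hd2 : ρ₂ X = ρ₂ H
  · left; rw [hρ X, hρ H, hd1, hd2]
  · right
    have hd2pos : 0 < ρ₂ X - ρ₂ H := lt_of_le_of_ne (by linarith only [hd2nn]) (fun h => hd2 (by linarith only [h]))
    have hρa : ρ a = 1 := by rw [hρ a, hnl₁ a ha1, hnl₂ a ha1]; ring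
    constructor
    · rw [hρ X, hρ H, hd1]
      have hp := mul_pos (show (0:ℝ) < 1 - l by linarith only [hl1]) hd2pos
      linarith only [hp]
    · exact ⟨a, ha1, haX, haH, by
        rw [hρ X, hρ H, hd1, hρa]
        have hq := mul_le_mul_of_nonneg_left hd2le (show (0:ℝ) ≤ 1 - l by linarith only [hl1])
        linarith only [hq, hl0]⟩

/-- Cyclic spaces of loopless q-matroids remain cyclic in any convex combination. -/
theorem stmt6 [Fintype F] [FiniteDimensional F E]
    (ρ₁ ρ₂ : Submodule F E → ℝ) (h₁ : IsQRankFn ρ₁) (h₂ : IsQRankFn ρ₂)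
    (hint₁ : ∀ X : Submodule F E, ∃ m : ℤ, ρ₁ X = m)
    (hint₂ : ∀ X : Submodule F E, ∃ m : ℤ, ρ₂ X = m)
    (hnl₁ : ∀ x : Submodule F E, Module.finrank F x = 1 → ρ₁ x = 1)
    (hnl₂ : ∀ x : Submodule F E, Module.finrank F x = 1 → ρ₂ x = 1)
    (l : ℝ) (hl0 : 0 < l) (hl1 : l < 1)
    (ρ : Submodule F E → ℝ) (hρ : ∀ X, ρ X = l * ρ₁ X + (1 - l) * ρ₂ X)
    (X : Submodule F E) (hX : IsCyclicSpace ρ₁ X ∨ IsCyclicSpace ρ₂ X) :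
    IsCyclicSpace ρ X := by
  rcases hX with hX | hX
  · exact aux_cyclic ρ₁ ρ₂ h₂ hint₁ hnl₁ hnl₂ l hl0 hl1 ρ hρ X hX
  · exact aux_cyclic ρ₂ ρ₁ h₁ hint₂ hnl₂ hnl₁ (1 - l) (by linarith) (by linarith) ρ
      (fun Y => by rw [hρ Y]; ring) X hX
end

section
/- Let M₁ = (L(E),ρ₁) and M₂ = (L(E),ρ₂) be q-matroids, let λ = a/μ ∈ ℚ with 1 ≤ a < μ integers, and let ρ = λρ₁ + (1−λ)ρ₂. If X is an independent space of M₁ or of M₂, then X is μ-independent in (L(E),ρ), i.e. ρ(J) ≥ dim(J)/μ for all subspaces J ≤ X. -/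
variable {F E : Type*} [Field F] [AddCommGroup E] [Module F E]

lemma indep_sub [FiniteDimensional F E] (ρ₁ : Submodule F E → ℝ) (h₁ : IsQRankFn ρ₁)
    (X : Submodule F E) (hX : ρ₁ X = (Module.finrank F X : ℝ))
    (J : Submodule F E) (hJ : J ≤ X) : (Module.finrank F J : ℝ) ≤ ρ₁ J := by
  obtain ⟨W', hW'⟩ := Submodule.exists_isCompl J
  set W := W' ⊓ X with hWdef
  have hsup : J ⊔ W = X := by
    rw [hWdef, ← sup_inf_assoc_of_le _ hJ, hW'.sup_eq_top, top_inf_eq]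
  have hinf : J ⊓ W = ⊥ := by
    rw [eq_bot_iff, ← hW'.inf_eq_bot]
    exact inf_le_inf_left _ inf_le_left
  have hfr : Module.finrank F X = Module.finrank F J + Module.finrank F W := by
    have := Submodule.finrank_sup_add_finrank_inf_eq J W
    rw [hsup, hinf, finrank_bot] at this
    omega
  obtain ⟨hb, hmono, hsubm⟩ := h₁
  have hs := hsubm J W
  rw [hsup, hinf, hX] at hs
  have h0 := (hb ⊥).1
  have hW := (hb W).2
  have : (Module.finrank F X : ℝ) = (Module.finrank F J : ℝ) + (Module.finrank F W : ℝ) := by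
    exact_mod_cast hfr
  linarith

/-- Independent spaces of either q-matroid are μ-independent in the convex combination. -/
theorem stmt7 [Fintype F] [FiniteDimensional F E]
    (ρ₁ ρ₂ : Submodule F E → ℝ) (h₁ : IsQRankFn ρ₁) (h₂ : IsQRankFn ρ₂)
    (hint₁ : ∀ X : Submodule F E, ∃ m : ℤ, ρ₁ X = m)
    (hint₂ : ∀ X : Submodule F E, ∃ m : ℤ, ρ₂ X = m)
    (a μ : ℕ) (ha : 1 ≤ a) (haμ : a < μ)
    (ρ : Submodule F E → ℝ)
    (hρ : ∀ X, ρ X = ((a : ℝ) / μ) * ρ₁ X + (1 - (a : ℝ) / μ) * ρ₂ X)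
    (X : Submodule F E)
    (hX : ρ₁ X = (Module.finrank F X : ℝ) ∨ ρ₂ X = (Module.finrank F X : ℝ)) :
    ∀ J ≤ X, (Module.finrank F J : ℝ) / μ ≤ ρ J := by
  intro J hJ
  have hμ : (0:ℝ) < μ := by exact_mod_cast Nat.lt_of_lt_of_le (Nat.lt_of_lt_of_le Nat.zero_lt_one ha) (Nat.le_of_lt haμ)
  have ha' : (1:ℝ) ≤ a := by exact_mod_cast ha
  have haμ' : (a:ℝ) + 1 ≤ μ := by exact_mod_cast haμ
  have hd : (0:ℝ) ≤ (Module.finrank F J : ℝ) := by positivity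
  have h1b := ((h₁.1) J).1
  have h2b := ((h₂.1) J).1
  rw [hρ, div_le_iff₀ hμ]
  have hexp : ((a : ℝ) / μ * ρ₁ J + (1 - (a : ℝ) / μ) * ρ₂ J) * μ
      = a * ρ₁ J + (μ - a) * ρ₂ J := by field_simp
  rw [hexp]
  rcases hX with h | h
  · have := indep_sub ρ₁ h₁ X h J hJ
    nlinarith
  · have := indep_sub ρ₂ h₂ X h J hJ
    nlinarith
end

section
/- Let M₁, M₂ be q-matroids on E with independent-space collections I₁, I₂ and dependent-space collections D₁, D₂, and let M be a convex combination with rational coefficient λ = a/μ (1 ≤ a < μ). Then every μ-dependent space of M lies in D₁ ∩ D₂, and every space that is a circuit of M₁ or of M₂ and is μ-dependent in M is a μ-circuit of M. -/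
variable {F E : Type*} [Field F] [AddCommGroup E] [Module F E]

/-- I is μ-independent: ρ(J) ≥ dim(J)/μ for all subspaces J ≤ I. -/
def MuIndep (ρ : Submodule F E → ℝ) (μ : ℕ) (I : Submodule F E) : Prop :=
  ∀ J ≤ I, (Module.finrank F J : ℝ) / μ ≤ ρ J

/-- C is a circuit of a q-matroid: dependent, and all proper subspaces independent. -/
def IsCircuit (ρ : Submodule F E → ℝ) (C : Submodule F E) : Prop :=
  ρ C ≠ (Module.finrank F C : ℝ) ∧ ∀ Y < C, ρ Y = (Module.finrank F Y : ℝ)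

/-- If a q-rank function attains full rank on `X`, it attains full rank on every
subspace of `X`. -/
lemma rank_eq_of_le [FiniteDimensional F E] {ρ' : Submodule F E → ℝ} (h : IsQRankFn ρ')
    {X J : Submodule F E} (hJX : J ≤ X) (hX : ρ' X = (Module.finrank F X : ℝ)) :
    ρ' J = (Module.finrank F J : ℝ) := by
  obtain ⟨hbd, hmono, hsub⟩ := h
  -- complement of J inside X
  set p : Submodule F X := J.comap X.subtype with hp
  obtain ⟨q, hq⟩ := Submodule.exists_isCompl p
  set B : Submodule F E := q.map X.subtype with hB
  have hmapp : p.map X.subtype = J := by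
    rw [Submodule.map_comap_eq, Submodule.range_subtype, inf_eq_right.mpr hJX]
  have hsup : J ⊔ B = X := by
    rw [← hmapp, hB, ← Submodule.map_sup, hq.sup_eq_top, Submodule.map_top,
      Submodule.range_subtype]
  have hinf : J ⊓ B = ⊥ := by
    rw [← hmapp, hB, ← Submodule.map_inf _ X.injective_subtype, hq.inf_eq_bot,
      Submodule.map_bot]
  have hdim : Module.finrank F J + Module.finrank F B = Module.finrank F X := by
    rw [← hmapp, hB, Submodule.finrank_map_subtype_eq, Submodule.finrank_map_subtype_eq]
    exact Submodule.finrank_add_eq_of_isCompl hq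
  have h1 : ρ' X ≤ ρ' J + ρ' B := by
    have := hsub J B
    rw [hinf, hsup] at this
    have h0 : (0:ℝ) ≤ ρ' ⊥ := (hbd ⊥).1
    linarith
  have h2 : ρ' B ≤ (Module.finrank F B : ℝ) := (hbd B).2
  have h3 : ρ' J ≤ (Module.finrank F J : ℝ) := (hbd J).2
  have hdimR : (Module.finrank F J : ℝ) + (Module.finrank F B : ℝ)
      = (Module.finrank F X : ℝ) := by exact_mod_cast congrArg (Nat.cast : ℕ → ℝ) hdim
  linarith

/-- If one of the two q-rank functions attains full rank on `X` and its coefficient is at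
least `1/μ`, then `X` is μ-independent for the convex combination. -/
lemma muIndep_of_full_rank [FiniteDimensional F E]
    {ρ ρ' ρ'' : Submodule F E → ℝ} (h' : IsQRankFn ρ') (h'' : IsQRankFn ρ'')
    {c d : ℝ} (hd : 0 ≤ d) (hρ : ∀ X, ρ X = c * ρ' X + d * ρ'' X)
    {μ : ℕ} (hμ : 0 < μ) (hc : (1:ℝ)/μ ≤ c) {X : Submodule F E}
    (hX : ρ' X = (Module.finrank F X : ℝ)) : MuIndep ρ μ X := by
  intro J hJX
  have hJ : ρ' J = (Module.finrank F J : ℝ) := rank_eq_of_le h' hJX hX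
  have h0 : (0:ℝ) ≤ ρ'' J := (h''.1 J).1
  have hdimpos : (0:ℝ) ≤ (Module.finrank F J : ℝ) := by positivity
  have hμR : (0:ℝ) < (μ:ℝ) := by exact_mod_cast hμ
  have : (Module.finrank F J : ℝ) / μ ≤ c * ρ' J := by
    rw [hJ, div_eq_mul_one_div, mul_comm]
    exact mul_le_mul_of_nonneg_right hc hdimpos
  rw [hρ J]
  nlinarith
/-- μ-dependent spaces of the convex combination are dependent in both q-matroids, and
circuits of either q-matroid that are μ-dependent are μ-circuits. -/
theorem stmt8 [Fintype F] [FiniteDimensional F E]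
    (ρ₁ ρ₂ : Submodule F E → ℝ) (h₁ : IsQRankFn ρ₁) (h₂ : IsQRankFn ρ₂)
    (hint₁ : ∀ X : Submodule F E, ∃ m : ℤ, ρ₁ X = m)
    (hint₂ : ∀ X : Submodule F E, ∃ m : ℤ, ρ₂ X = m)
    (a μ : ℕ) (ha : 1 ≤ a) (haμ : a < μ)
    (ρ : Submodule F E → ℝ)
    (hρ : ∀ X, ρ X = ((a : ℝ) / μ) * ρ₁ X + (1 - (a : ℝ) / μ) * ρ₂ X) :
    (∀ X : Submodule F E, ¬ MuIndep ρ μ X →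
      ρ₁ X ≠ (Module.finrank F X : ℝ) ∧ ρ₂ X ≠ (Module.finrank F X : ℝ)) ∧
    (∀ X : Submodule F E, (IsCircuit ρ₁ X ∨ IsCircuit ρ₂ X) → ¬ MuIndep ρ μ X →
      (¬ MuIndep ρ μ X ∧ ∀ Y < X, MuIndep ρ μ Y)) := by
  have hμ : 0 < μ := lt_of_le_of_lt (Nat.zero_le a) haμ
  have hμR : (0:ℝ) < (μ:ℝ) := by exact_mod_cast hμ
  have haR : (1:ℝ) ≤ (a:ℝ) := by exact_mod_cast ha
  have haμR : (a:ℝ) + 1 ≤ (μ:ℝ) := by exact_mod_cast haμ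
  have hc1 : (1:ℝ)/μ ≤ (a:ℝ)/μ := by gcongr
  have hc2 : (1:ℝ)/μ ≤ 1 - (a:ℝ)/μ := by
    have heq : 1 - (a:ℝ)/μ = ((μ:ℝ) - a)/μ := by field_simp
    rw [heq]
    gcongr
    linarith
  have hcpos : (0:ℝ) ≤ (a:ℝ)/μ := by positivity
  have hdpos : (0:ℝ) ≤ 1 - (a:ℝ)/μ := le_trans (by positivity) hc2
  have hρ' : ∀ X, ρ X = (1 - (a:ℝ)/μ) * ρ₂ X + ((a:ℝ)/μ) * ρ₁ X := by
    intro X; rw [hρ X]; ring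
  have key : ∀ X : Submodule F E,
      (ρ₁ X = (Module.finrank F X : ℝ) ∨ ρ₂ X = (Module.finrank F X : ℝ)) →
      MuIndep ρ μ X := by
    intro X hX
    rcases hX with hX | hX
    · exact muIndep_of_full_rank h₁ h₂ hdpos hρ hμ hc1 hX
    · exact muIndep_of_full_rank h₂ h₁ hcpos hρ' hμ hc2 hX
  constructor
  · intro X hdep
    constructor
    · intro hX; exact hdep (key X (Or.inl hX))
    · intro hX; exact hdep (key X (Or.inr hX))
  · intro X hcirc hdep
    refine ⟨hdep, fun Y hY => ?_⟩
    rcases hcirc with hc | hc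
    · exact key Y (Or.inl (hc.2 Y hY))
    · exact key Y (Or.inr (hc.2 Y hY))
end

section
/- Let S₁, S₂ ⊆ L(E)_k be disjoint families each with pairwise intersections of dimension ≤ k−2, let M₁ = M_{S₁}, M₂ = M_{S₂} be the induced paving q-matroids, and let ρ = λρ₁ + (1−λ)ρ₂ with 0 < λ < 1 rational. Then the flats of (L(E),ρ) are exactly S₁ ∪ S₂ ∪ {E} ∪ {X : dim X ≤ k−1}. -/
/-- F is a flat of (L(E),ρ). -/
def IsFlat {F E : Type*} [Field F] [AddCommGroup E] [Module F E]
    (ρ : Submodule F E → ℝ) (Fl : Submodule F E) : Prop :=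
  ∀ v : Submodule F E, Module.finrank F v = 1 → ¬ v ≤ Fl → ρ Fl < ρ (Fl ⊔ v)

/-- The flats of a rational convex combination of two paving q-matroids induced by
disjoint families S₁, S₂ are exactly S₁ ∪ S₂ ∪ {E} ∪ {X : dim X ≤ k−1}. -/
theorem stmt13 (F : Type*) [Field F] [Fintype F] (n k : ℕ)
    (hk1 : 1 ≤ k) (hkn : k ≤ n - 1)
    (S₁ S₂ : Set (Submodule F (Fin n → F))) (hdisj : S₁ ∩ S₂ = ∅)
    (hS₁dim : ∀ V ∈ S₁, Module.finrank F V = k)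
    (hS₂dim : ∀ V ∈ S₂, Module.finrank F V = k)
    (hS₁int : ∀ V ∈ S₁, ∀ W ∈ S₁, V ≠ W → Module.finrank F ↥(V ⊓ W) + 2 ≤ k)
    (hS₂int : ∀ V ∈ S₂, ∀ W ∈ S₂, V ≠ W → Module.finrank F ↥(V ⊓ W) + 2 ≤ k)
    (ρ₁ ρ₂ : Submodule F (Fin n → F) → ℝ)
    (hρ₁S : ∀ V ∈ S₁, ρ₁ V = (k : ℝ) - 1)
    (hρ₁o : ∀ V ∉ S₁, ρ₁ V = ((min (Module.finrank F V) k : ℕ) : ℝ))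
    (hρ₂S : ∀ V ∈ S₂, ρ₂ V = (k : ℝ) - 1)
    (hρ₂o : ∀ V ∉ S₂, ρ₂ V = ((min (Module.finrank F V) k : ℕ) : ℝ))
    (l : ℚ) (hl0 : 0 < l) (hl1 : l < 1)
    (ρ : Submodule F (Fin n → F) → ℝ)
    (hρ : ∀ X, ρ X = (l : ℝ) * ρ₁ X + (1 - (l : ℝ)) * ρ₂ X) :
    ∀ X : Submodule F (Fin n → F),
      IsFlat ρ X ↔ (X ∈ S₁ ∨ X ∈ S₂ ∨ X = ⊤ ∨ Module.finrank F X ≤ k - 1) := by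
  have hl0' : (0 : ℝ) < (l : ℝ) := by exact_mod_cast hl0
  have hl1' : (l : ℝ) < 1 := by exact_mod_cast hl1
  have hρ₁le : ∀ Y : Submodule F (Fin n → F), ρ₁ Y ≤ k := by
    intro Y
    by_cases h : Y ∈ S₁
    · rw [hρ₁S Y h]; linarith
    · rw [hρ₁o Y h]
      exact_mod_cast Nat.cast_le.mpr (min_le_right _ _)
  have hρ₂le : ∀ Y : Submodule F (Fin n → F), ρ₂ Y ≤ k := by
    intro Y
    by_cases h : Y ∈ S₂
    · rw [hρ₂S Y h]; linarith
    · rw [hρ₂o Y h]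
      exact_mod_cast Nat.cast_le.mpr (min_le_right _ _)
  intro X
  constructor
  · -- flat → in the list
    intro hfl
    by_contra hc
    push_neg at hc
    obtain ⟨h1, h2, h3, h4⟩ := hc
    have hdX : k ≤ Module.finrank F X := by omega
    have hex : ∃ x : Fin n → F, x ∉ X := by
      by_contra h; push_neg at h
      exact h3 (Submodule.eq_top_iff'.mpr h)
    obtain ⟨x, hx⟩ := hex
    have hx0 : x ≠ 0 := fun h => hx (h ▸ X.zero_mem)
    have hv1 : Module.finrank F (Submodule.span F {x}) = 1 :=
      finrank_span_singleton hx0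
    have hvle : ¬ Submodule.span F {x} ≤ X := fun h =>
      hx (h (Submodule.mem_span_singleton_self x))
    have hlt := hfl _ hv1 hvle
    clear hvle hfl
    have hρX : ρ X = (k : ℝ) := by
      rw [hρ, hρ₁o X h1, hρ₂o X h2, min_eq_right hdX]
      ring
    have hub : ρ (X ⊔ Submodule.span F {x}) ≤ (k : ℝ) := by
      rw [hρ]
      nlinarith [hρ₁le (X ⊔ Submodule.span F {x}), hρ₂le (X ⊔ Submodule.span F {x})]
    linarith [hlt, hρX ▸ hlt]
  · intro h
    intro v hv1 hvle
    have hXlt : X < X ⊔ v := left_lt_sup.mpr hvle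
    clear hvle
    have hdlt : Module.finrank F X < Module.finrank F (X ⊔ v : Submodule F (Fin n → F)) :=
      Submodule.finrank_lt_finrank_of_lt hXlt
    rcases h with h | h | h | h
    · -- X ∈ S₁
      have h2 : X ∉ S₂ := fun hh => by
        have : X ∈ S₁ ∩ S₂ := ⟨h, hh⟩
        simp [hdisj] at this
      have hdk : Module.finrank F X = k := hS₁dim X h
      have hs1 : X ⊔ v ∉ S₁ := fun hh => by
        have := hS₁dim _ hh; omega
      have hs2 : X ⊔ v ∉ S₂ := fun hh => by
        have := hS₂dim _ hh; omega
      have hmin : min (Module.finrank F (X ⊔ v : Submodule F (Fin n → F))) k = k :=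
        min_eq_right (by omega)
      rw [hρ, hρ, hρ₁S X h, hρ₂o X h2, hρ₁o _ hs1, hρ₂o _ hs2, hmin, hdk,
        min_eq_right (le_refl k)]
      nlinarith
    · -- X ∈ S₂
      have h1 : X ∉ S₁ := fun hh => by
        have : X ∈ S₁ ∩ S₂ := ⟨hh, h⟩
        simp [hdisj] at this
      have hdk : Module.finrank F X = k := hS₂dim X h
      have hs1 : X ⊔ v ∉ S₁ := fun hh => by
        have := hS₁dim _ hh; omega
      have hs2 : X ⊔ v ∉ S₂ := fun hh => by
        have := hS₂dim _ hh; omega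
      have hmin : min (Module.finrank F (X ⊔ v : Submodule F (Fin n → F))) k = k :=
        min_eq_right (by omega)
      rw [hρ, hρ, hρ₂S X h, hρ₁o X h1, hρ₁o _ hs1, hρ₂o _ hs2, hmin, hdk,
        min_eq_right (le_refl k)]
      nlinarith
    · exact absurd hXlt (by simp [h])
    · -- dim X ≤ k - 1
      have hdk : Module.finrank F X < k := by omega
      have h1 : X ∉ S₁ := fun hh => by have := hS₁dim X hh; omega
      have h2 : X ∉ S₂ := fun hh => by have := hS₂dim X hh; omega
      have hminX : min (Module.finrank F X) k = Module.finrank F X :=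
        min_eq_left (by omega)
      set d := Module.finrank F X with hd
      set m := min (Module.finrank F (X ⊔ v : Submodule F (Fin n → F))) k with hm
      have hmge : d + 1 ≤ m := le_min (by omega) (by omega)
      have hmgeR : (d : ℝ) + 1 ≤ (m : ℝ) := by exact_mod_cast hmge
      have hdkR : (d : ℝ) + 1 ≤ (k : ℝ) := by exact_mod_cast hdk
      rw [hρ, hρ, hρ₁o X h1, hρ₂o X h2, hminX]
      by_cases hs1 : X ⊔ v ∈ S₁
      · have hs2 : X ⊔ v ∉ S₂ := fun hh => by
          have : X ⊔ v ∈ S₁ ∩ S₂ := ⟨hs1, hh⟩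
          simp [hdisj] at this
        rw [hρ₁S _ hs1, hρ₂o _ hs2, ← hm]
        nlinarith
      · by_cases hs2 : X ⊔ v ∈ S₂
        · rw [hρ₂S _ hs2, hρ₁o _ hs1, ← hm]
          nlinarith
        · rw [hρ₁o _ hs1, hρ₂o _ hs2, ← hm]
          nlinarith
end

section
/- Let 1 < k₁ < k₂ < n, let ρ₁, ρ₂ be the rank functions of the uniform q-matroids U_{k₁,n}(q) and U_{k₂,n}(q) (i.e. ρᵢ(V) = min{kᵢ, dim V}), let λ = a/μ with integers a ≥ 1, μ ≥ 2, a < μ, and ρ = (1−λ)ρ₁ + λρ₂. If μ ≥ ⌈n/k₁⌉, then every subspace X of F_q^n is μ-independent in (L(E),ρ), i.e. ρ(J) ≥ dim(J)/μ for all subspaces J. -/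
/-- If μ ≥ ⌈n/k₁⌉, every subspace is μ-independent in the convex combination of the
uniform q-matroids U_{k₁,n}(q) and U_{k₂,n}(q). -/
theorem stmt15 (F : Type*) [Field F] [Fintype F] (n k₁ k₂ : ℕ)
    (hk₁ : 1 < k₁) (hk₁₂ : k₁ < k₂) (hk₂n : k₂ < n)
    (ρ₁ ρ₂ : Submodule F (Fin n → F) → ℝ)
    (hρ₁ : ∀ V, ρ₁ V = ((min k₁ (Module.finrank F V) : ℕ) : ℝ))
    (hρ₂ : ∀ V, ρ₂ V = ((min k₂ (Module.finrank F V) : ℕ) : ℝ))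
    (a μ : ℕ) (ha : 1 ≤ a) (hμ : 2 ≤ μ) (haμ : a < μ)
    (ρ : Submodule F (Fin n → F) → ℝ)
    (hρ : ∀ X, ρ X = (1 - (a : ℝ) / μ) * ρ₁ X + ((a : ℝ) / μ) * ρ₂ X)
    (hceil : ⌈(n : ℚ) / k₁⌉ ≤ (μ : ℤ)) :
    ∀ X : Submodule F (Fin n → F), ∀ J ≤ X, (Module.finrank F J : ℝ) / μ ≤ ρ J := by
  intro X J _
  set d := Module.finrank F J with hd
  have hμ0 : (0:ℝ) < μ := by positivity
  have hk₁0 : 0 < k₁ := by omega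
  -- n ≤ μ * k₁
  have hnμ : n ≤ μ * k₁ := by
    have : (n : ℚ) / k₁ ≤ μ := by exact_mod_cast Int.ceil_le.mp hceil
    have := (div_le_iff₀ (by exact_mod_cast hk₁0 : (0:ℚ) < k₁)).mp this
    exact_mod_cast this
  -- d ≤ n
  have hdn : d ≤ n := by
    have := Submodule.finrank_le J
    simpa [Module.finrank_fin_fun] using this
  -- key: d ≤ μ * min k₁ d
  have hkey : d ≤ μ * min k₁ d := by
    rcases le_total d k₁ with h | h
    · rw [min_eq_right h]; nlinarith
    · rw [min_eq_left h]; omega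
  -- ρ J ≥ min k₁ d
  have hl1 : (a : ℝ) / μ ≤ 1 := by
    rw [div_le_one hμ0]; exact_mod_cast haμ.le
  have hl0 : (0:ℝ) ≤ (a : ℝ) / μ := by positivity
  have hmono : ((min k₁ d : ℕ) : ℝ) ≤ ((min k₂ d : ℕ) : ℝ) := by
    have : min k₁ d ≤ min k₂ d := by omega
    exact_mod_cast this
  have hρJ : ((min k₁ d : ℕ) : ℝ) ≤ ρ J := by
    rw [hρ, hρ₁, hρ₂, ← hd]
    nlinarith
  calc (d : ℝ) / μ ≤ ((min k₁ d : ℕ) : ℝ) := by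
        rw [div_le_iff₀ hμ0]
        have : (d : ℝ) ≤ (μ : ℝ) * (min k₁ d : ℕ) := by exact_mod_cast hkey
        linarith [this]
    _ ≤ ρ J := hρJ
end

section
/- Let 1 < k₁ < k₂ < n with k₁ + k₂ ≥ n, let ρᵢ(V) = min{kᵢ, dim V} be the uniform q-matroid rank functions, λ = a/μ with 1 ≤ a < μ, μ ≥ 2, and ρ = (1−λ)ρ₁ + λρ₂. Then every subspace of F_q^n is μ-independent in (L(E),ρ). -/
/-- If k₁ + k₂ ≥ n, every subspace is μ-independent in the convex combination of the
uniform q-matroids U_{k₁,n}(q) and U_{k₂,n}(q). -/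
theorem stmt16 (F : Type*) [Field F] [Fintype F] (n k₁ k₂ : ℕ)
    (hk₁ : 1 < k₁) (hk₁₂ : k₁ < k₂) (hk₂n : k₂ < n) (hsum : n ≤ k₁ + k₂)
    (ρ₁ ρ₂ : Submodule F (Fin n → F) → ℝ)
    (hρ₁ : ∀ V, ρ₁ V = ((min k₁ (Module.finrank F V) : ℕ) : ℝ))
    (hρ₂ : ∀ V, ρ₂ V = ((min k₂ (Module.finrank F V) : ℕ) : ℝ))
    (a μ : ℕ) (ha : 1 ≤ a) (hμ : 2 ≤ μ) (haμ : a < μ)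
    (ρ : Submodule F (Fin n → F) → ℝ)
    (hρ : ∀ X, ρ X = (1 - (a : ℝ) / μ) * ρ₁ X + ((a : ℝ) / μ) * ρ₂ X) :
    ∀ X : Submodule F (Fin n → F), ∀ J ≤ X, (Module.finrank F J : ℝ) / μ ≤ ρ J := by
  intro X J hJ
  have hd : Module.finrank F J ≤ n := by
    have := Submodule.finrank_le J
    simpa [Module.finrank_fin_fun] using this
  rw [hρ, hρ₁, hρ₂]
  set d := Module.finrank F J with hdd
  have hm : d ≤ min k₁ d + min k₂ d := by omega
  have hμR : (0:ℝ) < μ := by exact_mod_cast Nat.lt_of_lt_of_le (by norm_num) hμ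
  have ha' : (1:ℝ) ≤ (a:ℝ) := by exact_mod_cast ha
  have haμ' : (a:ℝ) + 1 ≤ (μ:ℝ) := by exact_mod_cast haμ
  have hm' : (d:ℝ) ≤ ((min k₁ d : ℕ):ℝ) + ((min k₂ d : ℕ):ℝ) := by exact_mod_cast hm
  have h1 : (0:ℝ) ≤ ((min k₁ d : ℕ):ℝ) := Nat.cast_nonneg _
  have h2 : (0:ℝ) ≤ ((min k₂ d : ℕ):ℝ) := Nat.cast_nonneg _
  rw [div_le_iff₀ hμR]
  have key : ((min k₁ d : ℕ):ℝ) + ((min k₂ d : ℕ):ℝ) ≤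
      ((μ:ℝ) - a) * ((min k₁ d : ℕ):ℝ) + (a:ℝ) * ((min k₂ d : ℕ):ℝ) := by
    nlinarith
  calc (d:ℝ) ≤ ((μ:ℝ) - a) * ((min k₁ d : ℕ):ℝ) + (a:ℝ) * ((min k₂ d : ℕ):ℝ) :=
        le_trans hm' key
    _ = ((1 - (a:ℝ)/μ) * ((min k₁ d : ℕ):ℝ) + ((a:ℝ)/μ) * ((min k₂ d : ℕ):ℝ)) * μ := by
        field_simp
end

section
/- Let n ≥ 5 and for i = 1,…,n−2 let ρᵢ(V) = min{i+1, dim V} be the rank function of the uniform q-matroid U_{i+1,n}(q). Let λ₁,…,λ_{n−2} be positive rationals summing to 1, ρ = Σᵢ λᵢρᵢ, and let μ be a common denominator of all λᵢ (so μ ≥ 3). Then every subspace of F_q^n of dimension at most n−1 is μ-independent in (L(E),ρ); if moreover μ ≥ ⌈n/2⌉, then every subspace of F_q^n is μ-independent. -/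
/-- helper: if d ≤ 2μ with μ > 0, and min 2 d ≤ r, then d/μ ≤ r. -/
lemma stmt18_aux (d μ : ℕ) (r : ℝ) (hμ : 0 < μ) (hd : d ≤ 2 * μ)
    (h : ((min 2 d : ℕ) : ℝ) ≤ r) : (d : ℝ) / μ ≤ r := by
  rcases le_or_gt d 2 with h2 | h2
  · have : (min 2 d : ℕ) = d := by omega
    rw [this] at h
    calc (d : ℝ) / μ ≤ d := by
          apply div_le_self (by positivity)
          exact_mod_cast hμ
      _ ≤ r := h
  · have : (min 2 d : ℕ) = 2 := by omega
    rw [this] at h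
    have hμ' : (0 : ℝ) < μ := by exact_mod_cast hμ
    rw [div_le_iff₀ hμ']
    have h2r : (2 : ℝ) ≤ r := by exact_mod_cast h
    calc (d : ℝ) ≤ 2 * μ := by exact_mod_cast hd
      _ ≤ r * μ := by nlinarith
    
/-- μ-independence for the convex combination of the n−2 uniform q-matroids
U_{i+1,n}(q), i = 1,…,n−2. -/
theorem stmt18 (F : Type*) [Field F] [Fintype F] (n : ℕ) (hn : 5 ≤ n)
    (lam : Fin (n - 2) → ℚ) (hpos : ∀ i, 0 < lam i) (hsum : ∑ i, lam i = 1)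
    (ρ : Submodule F (Fin n → F) → ℝ)
    (hρ : ∀ V, ρ V = ∑ i : Fin (n - 2),
      (lam i : ℝ) * ((min ((i : ℕ) + 2) (Module.finrank F V) : ℕ) : ℝ))
    (μ : ℕ) (hden : ∀ i, ∃ m : ℕ, lam i * μ = m) :
    (∀ X : Submodule F (Fin n → F), Module.finrank F X ≤ n - 1 →
      ∀ J ≤ X, (Module.finrank F J : ℝ) / μ ≤ ρ J) ∧
    (⌈(n : ℚ) / 2⌉ ≤ (μ : ℤ) →
      ∀ X : Submodule F (Fin n → F), ∀ J ≤ X, (Module.finrank F J : ℝ) / μ ≤ ρ J) := by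
  have hsumR : ∑ i, ((lam i : ℝ)) = 1 := by exact_mod_cast hsum
  -- key : min 2 (finrank J) ≤ ρ J
  have key : ∀ J : Submodule F (Fin n → F),
      ((min 2 (Module.finrank F J) : ℕ) : ℝ) ≤ ρ J := by
    intro J
    set d := Module.finrank F J with hd
    rw [hρ J]
    calc ((min 2 d : ℕ) : ℝ) = ∑ i : Fin (n - 2), (lam i : ℝ) * ((min 2 d : ℕ) : ℝ) := by
          rw [← Finset.sum_mul, hsumR, one_mul]
      _ ≤ ∑ i : Fin (n - 2), (lam i : ℝ) * ((min ((i : ℕ) + 2) d : ℕ) : ℝ) := by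
          apply Finset.sum_le_sum
          intro i _
          apply mul_le_mul_of_nonneg_left
          · exact_mod_cast min_le_min (by omega) le_rfl
          · have := hpos i
            positivity
  have hnonneg : ∀ J : Submodule F (Fin n → F), (0 : ℝ) ≤ ρ J := fun J =>
    le_trans (by positivity) (key J)
  -- if μ > 0 then μ ≥ n - 2
  have hμbig : 0 < μ → n - 2 ≤ μ := by
    intro hμ
    have h1 : ∀ i : Fin (n - 2), (1 : ℚ) ≤ lam i * μ := by
      intro i
      obtain ⟨m, hm⟩ := hden i
      have : 0 < lam i * μ := by
        have := hpos i
        have : (0 : ℚ) < μ := by exact_mod_cast hμ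
        positivity
      rw [hm] at this ⊢
      have : 0 < m := by exact_mod_cast this
      exact_mod_cast this
    have : ((n - 2 : ℕ) : ℚ) ≤ μ := by
      calc ((n - 2 : ℕ) : ℚ) = ∑ _i : Fin (n - 2), (1 : ℚ) := by simp
        _ ≤ ∑ i : Fin (n - 2), lam i * μ := Finset.sum_le_sum fun i _ => h1 i
        _ = (∑ i, lam i) * μ := by rw [Finset.sum_mul]
        _ = μ := by rw [hsum, one_mul]
    exact_mod_cast this
  have hrankJ : ∀ J : Submodule F (Fin n → F), Module.finrank F J ≤ n := by
    intro J
    have := Submodule.finrank_le J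
    simpa using this
  constructor
  · intro X hX J hJX
    rcases Nat.eq_zero_or_pos μ with hμ | hμ
    · simp [hμ, hnonneg J]
    · have hdX : Module.finrank F J ≤ Module.finrank F X :=
        Submodule.finrank_mono hJX
      apply stmt18_aux _ _ _ hμ _ (key J)
      have := hμbig hμ
      omega
  · intro hceil X J _
    rcases Nat.eq_zero_or_pos μ with hμ | hμ
    · exfalso
      subst hμ
      have h1 : (n : ℚ) / 2 ≤ ((0 : ℤ) : ℚ) := by
        calc (n : ℚ) / 2 ≤ (⌈(n : ℚ) / 2⌉ : ℚ) := Int.le_ceil _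
          _ ≤ ((0 : ℤ) : ℚ) := by exact_mod_cast hceil
      have : (n : ℚ) ≤ 0 := by push_cast at h1 ⊢; linarith
      have : n = 0 := by exact_mod_cast le_antisymm this (by positivity)
      omega
    · apply stmt18_aux _ _ _ hμ _ (key J)
      have h2μ : (n : ℚ) ≤ 2 * μ := by
        have : (n : ℚ) / 2 ≤ μ := by
          have := Int.ceil_le_ceil (le_refl ((n : ℚ) / 2))
          calc (n : ℚ) / 2 ≤ ⌈(n : ℚ) / 2⌉ := Int.le_ceil _
            _ ≤ (μ : ℤ) := by exact_mod_cast hceil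
            _ = (μ : ℚ) := by norm_num
        linarith
      have : n ≤ 2 * μ := by exact_mod_cast h2μ
      have := hrankJ J
      omega
end

section
/- Let n ≥ 2, let 1 < k₁ < k₂ be integers with k₁ + k₂ ≥ n, suppose kᵢ/n ∈ ℕ, and define ρᵢ(U) = dim(U) if dim(U) ≤ kᵢ/n and ρᵢ(U) = kᵢ/(n−1) otherwise. Let λ = a/b with coprime positive integers a < b, and ρ = (1−λ)ρ₁ + λρ₂. Then μ = b(n−1) satisfies μρ(X) ∈ ℤ for all subspaces X, and every subspace of F_q^n is μ-independent in (L(E),ρ). -/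
/-- For the convex combination of the q-polymatroids of two MRD codes in F_q^{n×(n−1)},
μ = b(n−1) is a denominator and every subspace is μ-independent. -/
theorem stmt19 (F : Type*) [Field F] [Fintype F] (n k₁ k₂ : ℕ) (hn : 2 ≤ n)
    (hk₁ : 1 < k₁) (hk₁₂ : k₁ < k₂) (hsum : n ≤ k₁ + k₂)
    (hd₁ : n ∣ k₁) (hd₂ : n ∣ k₂)
    (ρ₁ ρ₂ : Submodule F (Fin n → F) → ℝ)
    (hρ₁a : ∀ U : Submodule F (Fin n → F), Module.finrank F U ≤ k₁ / n → ρ₁ U = (Module.finrank F U : ℝ))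
    (hρ₁b : ∀ U : Submodule F (Fin n → F), k₁ / n < Module.finrank F U → ρ₁ U = (k₁ : ℝ) / ((n : ℝ) - 1))
    (hρ₂a : ∀ U : Submodule F (Fin n → F), Module.finrank F U ≤ k₂ / n → ρ₂ U = (Module.finrank F U : ℝ))
    (hρ₂b : ∀ U : Submodule F (Fin n → F), k₂ / n < Module.finrank F U → ρ₂ U = (k₂ : ℝ) / ((n : ℝ) - 1))
    (a b : ℕ) (ha : 0 < a) (hab : a < b) (hcop : Nat.Coprime a b)
    (ρ : Submodule F (Fin n → F) → ℝ)
    (hρ : ∀ X, ρ X = (1 - (a : ℝ) / b) * ρ₁ X + ((a : ℝ) / b) * ρ₂ X) :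
    (∀ X : Submodule F (Fin n → F), ∃ m : ℤ, ((b * (n - 1) : ℕ) : ℝ) * ρ X = m) ∧
    (∀ X : Submodule F (Fin n → F), ∀ J ≤ X,
      (Module.finrank F J : ℝ) / ((b * (n - 1) : ℕ) : ℝ) ≤ ρ J) := by
  have hn1R : ((n - 1 : ℕ) : ℝ) = (n : ℝ) - 1 := by
    push_cast [Nat.cast_sub (by omega : 1 ≤ n)]; ring
  have hn1pos : (0:ℝ) < (n : ℝ) - 1 := by
    have : (2:ℝ) ≤ (n:ℝ) := by exact_mod_cast hn
    linarith
  have hbpos : (0:ℝ) < (b:ℝ) := by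
    have : 0 < b := lt_trans ha hab
    exact_mod_cast this
  -- each ρᵢ times (n-1) is an integer
  have key : ∀ (k : ℕ) (ρi : Submodule F (Fin n → F) → ℝ), 1 < k → n ∣ k →
      (∀ U : Submodule F (Fin n → F), Module.finrank F U ≤ k / n → ρi U = (Module.finrank F U : ℝ)) →
      (∀ U : Submodule F (Fin n → F), k / n < Module.finrank F U → ρi U = (k : ℝ) / ((n : ℝ) - 1)) →
      ∀ X, (∃ m : ℤ, ((n - 1 : ℕ) : ℝ) * ρi X = m) ∧
        (Module.finrank F X : ℝ) / ((b * (n - 1) : ℕ) : ℝ) ≤ ρi X := by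
    intro k ρi hk hd hA hB X
    have hkn : n ≤ k := Nat.le_of_dvd (by omega) hd
    have hXn : Module.finrank F X ≤ n := by
      have := Submodule.finrank_le X
      simpa [Module.finrank_fin_fun] using this
    have hμpos : (0:ℝ) < ((b * (n - 1) : ℕ) : ℝ) := by
      have : 0 < b * (n - 1) := Nat.mul_pos (lt_trans ha hab) (by omega)
      exact_mod_cast this
    have hμ1 : (1:ℝ) ≤ ((b * (n - 1) : ℕ) : ℝ) := by
      have : 1 ≤ b * (n - 1) := Nat.mul_pos (lt_trans ha hab) (by omega)
      exact_mod_cast this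
    constructor
    · by_cases h : Module.finrank F X ≤ k / n
      · refine ⟨((n - 1) * Module.finrank F X : ℕ), ?_⟩
        rw [hA X h]; push_cast; ring
      · refine ⟨(k : ℤ), ?_⟩
        rw [hB X (lt_of_not_ge h), hn1R]
        field_simp
        push_cast; rfl
    · by_cases h : Module.finrank F X ≤ k / n
      · rw [hA X h]
        rw [div_le_iff₀ hμpos]
        nlinarith [Nat.cast_nonneg (α := ℝ) (Module.finrank F X)]
      · rw [hB X (lt_of_not_ge h)]
        rw [div_le_div_iff₀ hμpos hn1pos]
        have h1 : (Module.finrank F X : ℝ) ≤ (n : ℝ) := by exact_mod_cast hXn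
        have h2 : (n : ℝ) ≤ (k : ℝ) := by exact_mod_cast hkn
        have h3 : ((n:ℝ) - 1) ≤ ((b * (n - 1) : ℕ) : ℝ) := by
          rw [← hn1R]
          have : (n - 1) ≤ b * (n - 1) := Nat.le_mul_of_pos_left _ (lt_trans ha hab)
          exact_mod_cast this
        nlinarith
  have K1 := key k₁ ρ₁ hk₁ hd₁ hρ₁a hρ₁b
  have K2 := key k₂ ρ₂ (lt_trans hk₁ hk₁₂) hd₂ hρ₂a hρ₂b
  constructor
  · intro X
    obtain ⟨m₁, hm₁⟩ := (K1 X).1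
    obtain ⟨m₂, hm₂⟩ := (K2 X).1
    refine ⟨((b:ℤ) - a) * m₁ + a * m₂, ?_⟩
    rw [hρ X]
    push_cast
    rw [← hm₁, ← hm₂]
    field_simp
  · intro X J _
    have h1 := (K1 J).2
    have h2 := (K2 J).2
    rw [hρ J]
    have hl0 : (0:ℝ) ≤ (a:ℝ)/b := by positivity
    have hl1 : (a:ℝ)/b ≤ 1 := by
      rw [div_le_one hbpos]; exact_mod_cast hab.le
    nlinarith [h1, h2]
end
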